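/- arXiv:2510.25569 — 3 statements merged into one kernel-verified Lean document; each statement's English description precedes it below -/
import Mathlib

section
/- Let D be a probability distribution over X×Y, h ∈ H a fixed hypothesis, and δ₁, δ₂, δ₃ ∈ [0,1]. Suppose L̃_S^Q, b̃_S^Q and c̃_S^Q are sample-dependent quantities such that: (1) with probability at least 1−δ₁ over S~D^m, for all Q over H, E_{h'~Q} L_D(h') ≤ L̃_S^Q; (2) with probability at least 1−δ₂ over S~D^m, for all Q over H, b_D^Q(h) ≥ b̃_S^Q; (3) with probability at least 1−δ₃ over S~D^m, for all Q over H, c_D^Q(h) ≥ c̃_S^Q; and (4) c̃_S^Q > b̃_S^Q. Then with probability at least 1−(δ₁+δ₂+δ₃) over S~D^m, for all Q over H: L_D(h) ≤ (L̃_S^Q − b̃_S^Q)/(c̃_S^Q − b̃_S^Q). -/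
/-!
STATEMENT 4 (Triple bound -- single hypothesis).
Given sample-dependent quantities `L̃ b̃ c̃` with
(1) `P_{S∼D^m}(∀Q, E_{h'∼Q}L_D(h') ≤ L̃_S^Q) ≥ 1−δ₁`,
(2) `P_{S∼D^m}(∀Q, b_D^Q(h) ≥ b̃_S^Q) ≥ 1−δ₂`,
(3) `P_{S∼D^m}(∀Q, c_D^Q(h) ≥ c̃_S^Q) ≥ 1−δ₃`,
(4) `c̃_S^Q > b̃_S^Q`, we get
`P_{S∼D^m}(∀Q, L_D(h) ≤ (L̃_S^Q − b̃_S^Q)/(c̃_S^Q − b̃_S^Q)) ≥ 1−(δ₁+δ₂+δ₃)`.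
-/

open MeasureTheory ProbabilityTheory
open scoped ENNReal

/-- The deterministic risk `L_D(h) = E_{(x,y)∼D} ℓ(h(x),y)`. -/
noncomputable def detRisk {X Y H : Type*} [MeasurableSpace X] [MeasurableSpace Y]
    (D : Measure (X × Y)) (ℓ : H → X × Y → ℝ) (h : H) : ℝ :=
  ∫ z, ℓ h z ∂D

/-- The stochastic risk `E_{h'∼Q} L_D(h')`. -/
noncomputable def stochRisk {X Y H : Type*} [MeasurableSpace X] [MeasurableSpace Y]
    [MeasurableSpace H] (D : Measure (X × Y)) (Q : Measure H) (ℓ : H → X × Y → ℝ) : ℝ :=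
  ∫ h', (∫ z, ℓ h' z ∂D) ∂Q

/-- `b_D^Q(h)`: the stochastic risk conditioned on `h`'s correct predictions. -/
noncomputable def bRisk {X Y H : Type*} [MeasurableSpace X] [MeasurableSpace Y]
    [MeasurableSpace H] (D : Measure (X × Y)) (Q : Measure H) (ℓ : H → X × Y → ℝ) (h : H) : ℝ :=
  ∫ z, (∫ h', ℓ h' z ∂Q) ∂(D[|{z | ℓ h z = 0}])

/-- `c_D^Q(h)`: the stochastic risk conditioned on `h`'s incorrect predictions. -/
noncomputable def cRisk {X Y H : Type*} [MeasurableSpace X] [MeasurableSpace Y]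
    [MeasurableSpace H] (D : Measure (X × Y)) (Q : Measure H) (ℓ : H → X × Y → ℝ) (h : H) : ℝ :=
  ∫ z, (∫ h', ℓ h' z ∂Q) ∂(D[|{z | ℓ h z = 1}])

/-!
Write `w = L_D(h) = D(ℓ(h(x),y) = 1)`. Splitting the stochastic risk along whether `h` errs gives
`E_{h'∼Q} L_D(h') = (1 - w) b_D^Q(h) + w c_D^Q(h)`. On the event where the three high-probability
bounds hold simultaneously (probability at least `1 - (δ₁ + δ₂ + δ₃)` by the union bound), this
yields `L̃_S^Q ≥ (1 - w) b̃_S^Q + w c̃_S^Q = b̃_S^Q + w (c̃_S^Q - b̃_S^Q)`, which is the claim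
since `c̃_S^Q > b̃_S^Q`.
-/

lemma one_sub_add_le_measure_inter {Ω : Type*} [MeasurableSpace Ω] {μ : Measure Ω}
    [IsProbabilityMeasure μ] {s t : Set Ω} {a b : ℝ≥0∞} (hs : MeasurableSet s)
    (ht : MeasurableSet t) (hsa : 1 - a ≤ μ s) (htb : 1 - b ≤ μ t) :
    1 - (a + b) ≤ μ (s ∩ t) := by
  have hsc : μ sᶜ ≤ a := by
    rw [prob_compl_eq_one_sub hs, tsub_le_iff_right, add_comm]
    exact tsub_le_iff_right.mp hsa
  have htc : μ tᶜ ≤ b := by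
    rw [prob_compl_eq_one_sub ht, tsub_le_iff_right, add_comm]
    exact tsub_le_iff_right.mp htb
  have hunion : μ (s ∩ t)ᶜ ≤ a + b := by
    rw [Set.compl_inter]
    exact (measure_union_le _ _).trans (add_le_add hsc htc)
  rw [prob_compl_eq_one_sub (hs.inter ht)] at hunion
  calc 1 - (a + b) ≤ 1 - (1 - μ (s ∩ t)) := tsub_le_tsub_left hunion 1
    _ ≤ μ (s ∩ t) := tsub_tsub_le_tsub_add.trans (by simp)

lemma measureReal_smul_integral_cond {Ω E : Type*} [MeasurableSpace Ω] [NormedAddCommGroup E]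
    [NormedSpace ℝ E] (μ : Measure Ω) [IsFiniteMeasure μ] (s : Set Ω) (f : Ω → E) :
    μ.real s • ∫ x, f x ∂μ[|s] = ∫ x in s, f x ∂μ := by
  by_cases hs : μ s = 0
  · simp [Measure.restrict_eq_zero.mpr hs, measureReal_def, hs]
  · rw [ProbabilityTheory.cond, integral_smul_measure, ENNReal.toReal_inv, smul_smul,
      measureReal_def, mul_inv_cancel₀ (ENNReal.toReal_ne_zero.mpr ⟨hs, measure_ne_top μ s⟩),
      one_smul]

lemma weight_le_div_of_convex_combination_le {w b c b' c' L : ℝ} (hw₀ : 0 ≤ w) (hw₁ : w ≤ 1)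
    (hmix : (1 - w) * b + w * c ≤ L) (hb : b' ≤ b) (hc : c' ≤ c) (hbc : b' < c') :
    w ≤ (L - b') / (c' - b') := by
  rw [le_div_iff₀ (sub_pos.mpr hbc)]
  nlinarith [mul_le_mul_of_nonneg_left hb (sub_nonneg.mpr hw₁), mul_le_mul_of_nonneg_left hc hw₀]

section BinaryLoss

variable {X Y H : Type*} [MeasurableSpace X] [MeasurableSpace Y]
  {D : Measure (X × Y)} {ℓ : H → X × Y → ℝ}

lemma detRisk_eq_measureReal {h : H} (hbin : ∀ z, ℓ h z = 0 ∨ ℓ h z = 1)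
    (hmeas : Measurable (ℓ h)) : detRisk D ℓ h = D.real {z | ℓ h z = 1} := by
  have hind : ℓ h = Set.indicator {z | ℓ h z = 1} 1 := by
    funext z
    rcases hbin z with hz | hz <;> simp [Set.indicator, hz]
  rw [detRisk, integral_congr_ae (ae_of_all _ (congrFun hind)),
    integral_indicator_one (measurableSet_eq_fun hmeas measurable_const)]

lemma detRisk_mem_Icc [IsProbabilityMeasure D] {h : H} (hbin : ∀ z, ℓ h z = 0 ∨ ℓ h z = 1)
    (hmeas : Measurable (ℓ h)) : detRisk D ℓ h ∈ Set.Icc 0 1 := by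
  rw [detRisk_eq_measureReal hbin hmeas]
  exact ⟨measureReal_nonneg, measureReal_le_one⟩

variable [MeasurableSpace H]

lemma integrable_uncurry_of_binary (Q : Measure H) [IsFiniteMeasure Q] [IsFiniteMeasure D]
    (hbin : ∀ h' z, ℓ h' z = 0 ∨ ℓ h' z = 1)
    (hmeas : Measurable fun p : H × (X × Y) => ℓ p.1 p.2) :
    Integrable (fun p : H × (X × Y) => ℓ p.1 p.2) (Q.prod D) :=
  .of_bound hmeas.aestronglyMeasurable 1 <| ae_of_all _ fun p => by
    rcases hbin p.1 p.2 with hp | hp <;> simp [hp]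

lemma stochRisk_eq_convex_combination [IsProbabilityMeasure D] (Q : Measure H)
    [IsFiniteMeasure Q] (hbin : ∀ h' z, ℓ h' z = 0 ∨ ℓ h' z = 1)
    (hmeas : Measurable fun p : H × (X × Y) => ℓ p.1 p.2) (h : H) :
    stochRisk D Q ℓ = (1 - detRisk D ℓ h) * bRisk D Q ℓ h + detRisk D ℓ h * cRisk D Q ℓ h := by
  have hmeas_h : Measurable (ℓ h) := hmeas.comp measurable_prodMk_left
  have herr : MeasurableSet {z | ℓ h z = 1} := hmeas_h (measurableSet_singleton 1)
  have hcompl : {z | ℓ h z = 1}ᶜ = {z | ℓ h z = 0} := by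
    ext z
    rcases hbin h z with hz | hz <;> simp [hz]
  have hint := integrable_uncurry_of_binary (D := D) Q hbin hmeas
  rw [detRisk_eq_measureReal (hbin h) hmeas_h, ← probReal_compl_eq_one_sub herr, hcompl, bRisk,
    cRisk, ← smul_eq_mul, measureReal_smul_integral_cond, ← smul_eq_mul,
    measureReal_smul_integral_cond, stochRisk, integral_integral_swap hint, ← hcompl, add_comm]
  exact (integral_add_compl herr hint.integral_prod_right).symm

end BinaryLoss

theorem triple_bound_single_hypothesis_general
    {X Y H : Type*} [MeasurableSpace X] [MeasurableSpace Y] [MeasurableSpace H]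
    (D : Measure (X × Y)) [IsProbabilityMeasure D]
    (ℓ : H → X × Y → ℝ)
    (hbin : ∀ h' z, ℓ h' z = 0 ∨ ℓ h' z = 1)
    (hmeas : Measurable fun p : H × (X × Y) => ℓ p.1 p.2)
    (h : H)
    (m : ℕ) (δ₁ δ₂ δ₃ : ℝ)
    (hδ₁ : 0 ≤ δ₁ ∧ δ₁ ≤ 1) (hδ₂ : 0 ≤ δ₂ ∧ δ₂ ≤ 1) (hδ₃ : 0 ≤ δ₃ ∧ δ₃ ≤ 1)
    (Lt bt ct : (Fin m → X × Y) → Measure H → ℝ)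
    (hA1meas : MeasurableSet {S : Fin m → X × Y |
      ∀ Q : Measure H, IsProbabilityMeasure Q → stochRisk D Q ℓ ≤ Lt S Q})
    (hA2meas : MeasurableSet {S : Fin m → X × Y |
      ∀ Q : Measure H, IsProbabilityMeasure Q → bt S Q ≤ bRisk D Q ℓ h})
    (hA3meas : MeasurableSet {S : Fin m → X × Y |
      ∀ Q : Measure H, IsProbabilityMeasure Q → ct S Q ≤ cRisk D Q ℓ h})
    (h1 : 1 - ENNReal.ofReal δ₁ ≤ Measure.pi (fun _ : Fin m => D)
      {S | ∀ Q : Measure H, IsProbabilityMeasure Q → stochRisk D Q ℓ ≤ Lt S Q})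
    (h2 : 1 - ENNReal.ofReal δ₂ ≤ Measure.pi (fun _ : Fin m => D)
      {S | ∀ Q : Measure H, IsProbabilityMeasure Q → bt S Q ≤ bRisk D Q ℓ h})
    (h3 : 1 - ENNReal.ofReal δ₃ ≤ Measure.pi (fun _ : Fin m => D)
      {S | ∀ Q : Measure H, IsProbabilityMeasure Q → ct S Q ≤ cRisk D Q ℓ h})
    (h4 : ∀ S : Fin m → X × Y, ∀ Q : Measure H, IsProbabilityMeasure Q → bt S Q < ct S Q) :
    1 - ENNReal.ofReal (δ₁ + δ₂ + δ₃) ≤ Measure.pi (fun _ : Fin m => D)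
      {S | ∀ Q : Measure H, IsProbabilityMeasure Q →
        detRisk D ℓ h ≤ (Lt S Q - bt S Q) / (ct S Q - bt S Q)} := by
  have hbounds : 1 - ENNReal.ofReal (δ₁ + δ₂ + δ₃) ≤ Measure.pi (fun _ : Fin m => D)
      ({S | ∀ Q : Measure H, IsProbabilityMeasure Q → stochRisk D Q ℓ ≤ Lt S Q} ∩
        {S | ∀ Q : Measure H, IsProbabilityMeasure Q → bt S Q ≤ bRisk D Q ℓ h} ∩
        {S | ∀ Q : Measure H, IsProbabilityMeasure Q → ct S Q ≤ cRisk D Q ℓ h}) := by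
    rw [ENNReal.ofReal_add (add_nonneg hδ₁.1 hδ₂.1) hδ₃.1, ENNReal.ofReal_add hδ₁.1 hδ₂.1]
    exact one_sub_add_le_measure_inter (hA1meas.inter hA2meas) hA3meas
      (one_sub_add_le_measure_inter hA1meas hA2meas h1 h2) h3
  refine hbounds.trans (measure_mono ?_)
  rintro S ⟨⟨hL, hb⟩, hc⟩ Q hQ
  have hmeas_h : Measurable (ℓ h) := hmeas.comp measurable_prodMk_left
  obtain ⟨hw₀, hw₁⟩ := detRisk_mem_Icc (D := D) (hbin h) hmeas_h
  have hmix := (stochRisk_eq_convex_combination Q hbin hmeas h).symm.trans_le (hL Q hQ)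
  exact weight_le_div_of_convex_combination_le hw₀ hw₁ hmix (hb Q hQ) (hc Q hQ) (h4 S Q hQ)

theorem triple_bound_single_hypothesis
    {X Y H : Type*} [MeasurableSpace X] [MeasurableSpace Y] [MeasurableSpace H]
    (D : Measure (X × Y)) [IsProbabilityMeasure D]
    (ℓ : H → X × Y → ℝ)
    (hbin : ∀ h' z, ℓ h' z = 0 ∨ ℓ h' z = 1)
    (hmeas : Measurable fun p : H × (X × Y) => ℓ p.1 p.2)
    (h : H)
    (hpos0 : D {z | ℓ h z = 0} ≠ 0)
    (hpos1 : D {z | ℓ h z = 1} ≠ 0)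
    (hsandwich : ∀ Q : Measure H, IsProbabilityMeasure Q →
      (bRisk D Q ℓ h ≤ stochRisk D Q ℓ ∧ stochRisk D Q ℓ ≤ cRisk D Q ℓ h) ∨
      (cRisk D Q ℓ h ≤ stochRisk D Q ℓ ∧ stochRisk D Q ℓ ≤ bRisk D Q ℓ h))
    (m : ℕ) (δ₁ δ₂ δ₃ : ℝ)
    (hδ₁ : 0 ≤ δ₁ ∧ δ₁ ≤ 1) (hδ₂ : 0 ≤ δ₂ ∧ δ₂ ≤ 1) (hδ₃ : 0 ≤ δ₃ ∧ δ₃ ≤ 1)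
    (Lt bt ct : (Fin m → X × Y) → Measure H → ℝ)
    (hA1meas : MeasurableSet {S : Fin m → X × Y |
      ∀ Q : Measure H, IsProbabilityMeasure Q → stochRisk D Q ℓ ≤ Lt S Q})
    (hA2meas : MeasurableSet {S : Fin m → X × Y |
      ∀ Q : Measure H, IsProbabilityMeasure Q → bt S Q ≤ bRisk D Q ℓ h})
    (hA3meas : MeasurableSet {S : Fin m → X × Y |
      ∀ Q : Measure H, IsProbabilityMeasure Q → ct S Q ≤ cRisk D Q ℓ h})
    (h1 : 1 - ENNReal.ofReal δ₁ ≤ Measure.pi (fun _ : Fin m => D)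
      {S | ∀ Q : Measure H, IsProbabilityMeasure Q → stochRisk D Q ℓ ≤ Lt S Q})
    (h2 : 1 - ENNReal.ofReal δ₂ ≤ Measure.pi (fun _ : Fin m => D)
      {S | ∀ Q : Measure H, IsProbabilityMeasure Q → bt S Q ≤ bRisk D Q ℓ h})
    (h3 : 1 - ENNReal.ofReal δ₃ ≤ Measure.pi (fun _ : Fin m => D)
      {S | ∀ Q : Measure H, IsProbabilityMeasure Q → ct S Q ≤ cRisk D Q ℓ h})
    (h4 : ∀ S : Fin m → X × Y, ∀ Q : Measure H, IsProbabilityMeasure Q → bt S Q < ct S Q) :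
    1 - ENNReal.ofReal (δ₁ + δ₂ + δ₃) ≤ Measure.pi (fun _ : Fin m => D)
      {S | ∀ Q : Measure H, IsProbabilityMeasure Q →
        detRisk D ℓ h ≤ (Lt S Q - bt S Q) / (ct S Q - bt S Q)} :=
  triple_bound_single_hypothesis_general D ℓ hbin hmeas h m δ₁ δ₂ δ₃ hδ₁ hδ₂ hδ₃ Lt bt ct hA1meas
    hA2meas hA3meas h1 h2 h3 h4
end

section
/- Let p ∈ [0,1]^n with Σ_i p_i = 1 and let C(p) be the Categorical distribution over the standard basis vectors of R^n with probabilities p. Let {p₁, p₂} be an optimal solution of the partition problem applied to p. Then for any data distribution D over X×Y: c_D^{C(p)}(h_p) ≥ max( Σ_{p∈p₁} p, Σ_{p∈p₂} p ). -/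
/-!
STATEMENT 10 (Weights partitioning lower bound -- Categorical).
For `p ∈ [0,1]^n` with `∑ p_i = 1`, `C(p)` the Categorical distribution on the
standard basis vectors of `ℝ^n`, and `{p₁,p₂}` (encoded by `T` and `Tᶜ`) an
optimal solution of the partition problem applied to `p`:
`c_D^{C(p)}(h_p) ≥ max(∑_{p∈p₁} p, ∑_{p∈p₂} p)`.
-/

open MeasureTheory ProbabilityTheory
open scoped ENNReal

/-- Majority-vote loss with threshold `θ`:
`ℓ(h_w(x),y) = 1{∑_i w_i·1{f_i(x) ≠ y} ≥ θ}`. -/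
noncomputable def mvLoss {X Y : Type*} [DecidableEq Y] {n : ℕ} (f : Fin n → X → Y)
    (θ : ℝ) (w : Fin n → ℝ) (x : X) (y : Y) : ℝ :=
  if θ ≤ ∑ i, w i * (if f i x ≠ y then 1 else 0) then 1 else 0

/-- The Categorical distribution `C(p)` over the standard basis vectors of `ℝ^n`. -/
noncomputable def catMeasure {n : ℕ} (p : Fin n → ℝ) : Measure (Fin n → ℝ) :=
  ∑ i, ENNReal.ofReal (p i) • Measure.dirac (Pi.single i (1 : ℝ))

/-!
Under `C(p)` the expected loss at `(x, y)` is the `p`-mass of the set `A` of base classifiers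
that err on `(x, y)`. Where the vote `h_p` errs, this mass is at least `1/2`, so
`max (∑_A p) (∑_{Aᶜ} p) = ∑_A p`; since `max a b = (a + b + |a - b|) / 2` and `a + b = 1` for
every partition, the optimal partition `T` has the smallest such maximum, hence
`max (∑_T p) (∑_{Tᶜ} p) ≤ ∑_A p` on the conditioning event, and one averages.
-/

open Finset

section Partition

variable {ι : Type*} [Fintype ι] [DecidableEq ι] {p : ι → ℝ}

lemma max_sum_sum_compl_le_of_abs_sub_le {T A : Finset ι}
    (h : |(∑ i ∈ T, p i) - ∑ i ∈ Tᶜ, p i| ≤ |(∑ i ∈ A, p i) - ∑ i ∈ Aᶜ, p i|) :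
    max (∑ i ∈ T, p i) (∑ i ∈ Tᶜ, p i) ≤ max (∑ i ∈ A, p i) (∑ i ∈ Aᶜ, p i) := by
  have two_mul_max (a b : ℝ) : 2 * max a b = a + b + |b - a| := by
    rw [two_mul, ← two_nsmul, two_nsmul_sup_eq_add_add_abs_sub]
  rw [abs_sub_comm, abs_sub_comm (∑ i ∈ A, p i)] at h
  have hT := sum_add_sum_compl T p
  have hA := sum_add_sum_compl A p
  linarith [two_mul_max (∑ i ∈ T, p i) (∑ i ∈ Tᶜ, p i),
    two_mul_max (∑ i ∈ A, p i) (∑ i ∈ Aᶜ, p i)]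

lemma max_sum_sum_compl_le_of_half_le (hsum : ∑ i, p i = 1) {T A : Finset ι}
    (hT : |(∑ i ∈ T, p i) - ∑ i ∈ Tᶜ, p i| ≤ |(∑ i ∈ A, p i) - ∑ i ∈ Aᶜ, p i|)
    (hA : 1 / 2 ≤ ∑ i ∈ A, p i) :
    max (∑ i ∈ T, p i) (∑ i ∈ Tᶜ, p i) ≤ ∑ i ∈ A, p i := by
  have hAc : ∑ i ∈ Aᶜ, p i ≤ ∑ i ∈ A, p i := by
    linarith [sum_add_sum_compl A p]
  simpa [max_eq_left hAc] using max_sum_sum_compl_le_of_abs_sub_le hT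

end Partition

lemma integral_catMeasure {n : ℕ} {p : Fin n → ℝ} (hp : ∀ i, 0 ≤ p i) (g : (Fin n → ℝ) → ℝ) :
    ∫ w, g w ∂(catMeasure p) = ∑ i, p i * g (Pi.single i 1) := by
  rw [catMeasure, integral_finsetSum_measure fun i _ =>
    (integrable_dirac enorm_lt_top).smul_measure ENNReal.ofReal_ne_top]
  refine sum_congr rfl fun i _ => ?_
  rw [integral_smul_measure, integral_dirac, ENNReal.toReal_ofReal (hp i), smul_eq_mul]

lemma le_integral_cond_of_forall_mem {Ω : Type*} [MeasurableSpace Ω] {μ : Measure Ω}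
    [IsFiniteMeasure μ] {s : Set Ω} (hs : MeasurableSet s) (hμs : μ s ≠ 0) {g : Ω → ℝ}
    (hg : Integrable g μ[|s]) {c : ℝ} (hc : ∀ z ∈ s, c ≤ g z) :
    c ≤ ∫ z, g z ∂μ[|s] := by
  have := cond_isProbabilityMeasure (s := s) hμs
  calc c = ∫ _, c ∂μ[|s] := by simp
    _ ≤ ∫ z, g z ∂μ[|s] :=
      integral_mono_ae (integrable_const c) hg ((ae_cond_mem hs).mono hc)

section MajorityVote

variable {X Y : Type*} [DecidableEq Y] {n : ℕ} (f : Fin n → X → Y)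

def errorSet (x : X) (y : Y) : Finset (Fin n) := {i | f i x ≠ y}

lemma sum_mul_ite_ne_eq_sum_errorSet (w : Fin n → ℝ) (x : X) (y : Y) :
    ∑ i, w i * (if f i x ≠ y then 1 else 0) = ∑ i ∈ errorSet f x y, w i := by
  simp [errorSet, sum_filter]

lemma mvLoss_eq_one_iff {θ : ℝ} {w : Fin n → ℝ} {x : X} {y : Y} :
    mvLoss f θ w x y = 1 ↔ θ ≤ ∑ i ∈ errorSet f x y, w i := by
  rw [mvLoss, sum_mul_ite_ne_eq_sum_errorSet]
  split_ifs <;> simp_all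

lemma abs_mvLoss_le_one (θ : ℝ) (w : Fin n → ℝ) (x : X) (y : Y) : |mvLoss f θ w x y| ≤ 1 := by
  unfold mvLoss
  split_ifs <;> simp

lemma mvLoss_single {θ : ℝ} (hθ₀ : 0 < θ) (hθ₁ : θ ≤ 1) (i : Fin n) (x : X) (y : Y) :
    mvLoss f θ (Pi.single i 1) x y = if f i x ≠ y then 1 else 0 := by
  simp only [mvLoss, Pi.single_apply, ite_mul, one_mul, zero_mul, sum_ite_eq', mem_univ, if_true]
  split_ifs <;> linarith

lemma sum_mul_mvLoss_single {θ : ℝ} (hθ₀ : 0 < θ) (hθ₁ : θ ≤ 1) (w : Fin n → ℝ) (x : X) (y : Y) :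
    ∑ i, w i * mvLoss f θ (Pi.single i 1) x y = ∑ i ∈ errorSet f x y, w i := by
  simp only [mvLoss_single f hθ₀ hθ₁, sum_mul_ite_ne_eq_sum_errorSet]

lemma integrable_mvLoss [MeasurableSpace X] [MeasurableSpace Y] {μ : Measure (X × Y)}
    [IsFiniteMeasure μ] {θ : ℝ} {w : Fin n → ℝ}
    (hw : Measurable fun z : X × Y => mvLoss f θ w z.1 z.2) :
    Integrable (fun z : X × Y => mvLoss f θ w z.1 z.2) μ :=
  .of_bound hw.aestronglyMeasurable 1 (.of_forall fun z => abs_mvLoss_le_one f θ w z.1 z.2)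

end MajorityVote

theorem categorical_partition_lower_bound
    {X Y : Type*} [MeasurableSpace X] [MeasurableSpace Y] [DecidableEq Y]
    {n : ℕ} (f : Fin n → X → Y) (p : Fin n → ℝ)
    (hp : ∀ i, 0 ≤ p i ∧ p i ≤ 1) (hsum : ∑ i, p i = 1)
    (T : Finset (Fin n))
    (hT : ∀ T' : Finset (Fin n),
      |(∑ i ∈ T, p i) - ∑ i ∈ Tᶜ, p i| ≤ |(∑ i ∈ T', p i) - ∑ i ∈ T'ᶜ, p i|)
    (D : Measure (X × Y)) [IsProbabilityMeasure D]
    (hmeas : ∀ w : Fin n → ℝ, Measurable fun z : X × Y => mvLoss f (1 / 2) w z.1 z.2)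
    (hpos1 : D {z | mvLoss f (1 / 2) p z.1 z.2 = 1} ≠ 0) :
    max (∑ i ∈ T, p i) (∑ i ∈ Tᶜ, p i)
      ≤ ∫ z, (∫ w, mvLoss f (1 / 2) w z.1 z.2 ∂(catMeasure p))
          ∂(D[|{z | mvLoss f (1 / 2) p z.1 z.2 = 1}]) := by
  simp only [integral_catMeasure (fun i => (hp i).1)]
  refine le_integral_cond_of_forall_mem (hmeas p (measurableSet_singleton 1)) hpos1
    (integrable_finsetSum _ fun i _ => (integrable_mvLoss f (hmeas _)).const_mul (p i))
    fun z hz => ?_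
  rw [sum_mul_mvLoss_single f one_half_pos one_half_lt_one.le]
  exact max_sum_sum_compl_le_of_half_le hsum (hT _) ((mvLoss_eq_one_iff f).1 hz)
end

section
/- Let Y = {−1, +1}, let f_1,...,f_n: X→{−1,+1} be base classifiers, let p ∈ R^n, and let N(p, I) be the n-dimensional Gaussian distribution with mean p and identity covariance. For every (x,y) ∈ X×{−1,+1}: E_{w~N(p,I)} ℓ(h_w(x), y) = Φ( y · (p·f(x)) / ||f(x)|| ), where f(x) = (f_1(x),...,f_n(x)), Φ(k) = (1/2)(1 − erf(k/√2)), and erf(k) = (2/√π)∫₀^k e^{−t²} dt. -/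
/-!
STATEMENT 14 (Majority vote -- binary Gaussian stochastic loss).
For base classifiers `f_i : X → {−1,+1}`, `p ∈ ℝ^n` and `N(p,I)` the Gaussian
with mean `p` and identity covariance (the product of `n` standard Gaussians
with means `p_i`), for every `(x,y) ∈ X × {−1,+1}`:
`E_{w∼N(p,I)} ℓ(h_w(x),y) = Φ(y·(p·f(x))/‖f(x)‖)`,
where `Φ(k) = ½(1 − erf(k/√2))` and `erf(k) = (2/√π)∫₀ᵏ e^{−t²} dt`.
-/

open MeasureTheory ProbabilityTheory
open scoped ENNReal

/-- Binary majority-vote loss `ℓ(h_w(x),y) = 1{y ≠ sign(w·f(x))}`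
(equivalently `½(1 − y·sign(w·f(x)))`), with the error convention on ties. -/
noncomputable def signLoss {X : Type*} {n : ℕ} (f : Fin n → X → ℝ)
    (w : Fin n → ℝ) (x : X) (y : ℝ) : ℝ :=
  if y * ∑ i, w i * f i x ≤ 0 then 1 else 0

/-- The Gaussian `N(p, I)` on `ℝ^n`. -/
noncomputable def gaussPi {n : ℕ} (p : Fin n → ℝ) : Measure (Fin n → ℝ) :=
  Measure.pi fun i => ProbabilityTheory.gaussianReal (p i) 1

/-- `erf(k) = (2/√π) ∫₀ᵏ e^{−t²} dt`. -/
noncomputable def erf (k : ℝ) : ℝ :=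
  2 / Real.sqrt Real.pi * ∫ t in (0 : ℝ)..k, Real.exp (-t ^ 2)

/-- `Φ(k) = ½(1 − erf(k/√2))`. -/
noncomputable def Phi (k : ℝ) : ℝ :=
  (1 - erf (k / Real.sqrt 2)) / 2

/-!
Under `N(p, I)` the margin `y (w · f(x)) = Σ_i w_i (y f_i(x))` is a linear combination of
independent Gaussians, hence (comparing characteristic functions) a Gaussian with mean
`y (p · f(x))` and variance `Σ_i (y f_i(x))² = ‖f(x)‖²`. The loss is the probability that this
margin is `≤ 0`; writing the margin as `m - σ Z` with `Z` standard normal, this is the tail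
`P(Z > m / σ)`, and the substitution `z = √2 t` turns the tail integral into `Φ(m / σ)`.
-/

open Real Set
open scoped NNReal

lemma map_sum_pi_gaussianReal {ι : Type*} [Fintype ι] (m : ι → ℝ) (v : ι → ℝ≥0) :
    (Measure.pi fun i => gaussianReal (m i) (v i)).map (fun w => ∑ i, w i)
      = gaussianReal (∑ i, m i) (∑ i, v i) := by
  refine Measure.ext_of_charFun (funext fun t => ?_)
  simp only [charFun_map_sum_pi_eq_prod, Finset.prod_apply, charFun_gaussianReal,
    ← Complex.exp_sum]
  push_cast
  simp only [Finset.sum_sub_distrib, Finset.mul_sum, Finset.sum_mul, Finset.sum_div]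

lemma map_sum_mul_pi_gaussianReal {ι : Type*} [Fintype ι] (m : ι → ℝ) (v : ι → ℝ≥0)
    (c : ι → ℝ) :
    (Measure.pi fun i => gaussianReal (m i) (v i)).map (fun w => ∑ i, w i * c i)
      = gaussianReal (∑ i, c i * m i) (∑ i, ‖c i‖₊ ^ 2 * v i) := by
  have hcomp : (fun w : ι → ℝ => ∑ i, w i * c i)
      = (fun w => ∑ i, w i) ∘ (fun w i => w i * c i) := rfl
  have hsq : ∀ i, NNReal.mk (c i ^ 2) (sq_nonneg _) = ‖c i‖₊ ^ 2 := fun i => by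
    ext; simp
  rw [hcomp, ← Measure.map_map (by fun_prop) (by fun_prop),
    Measure.pi_map_pi (f := fun i a => a * c i) (fun i => by fun_prop)]
  simp only [gaussianReal_map_mul_const, hsq]
  exact map_sum_pi_gaussianReal _ _

lemma Phi_eq_integral_Ioi (k : ℝ) :
    Phi k = (√π)⁻¹ * ∫ t in Ioi (k / √2), exp (-t ^ 2) := by
  have hint : ∀ a : ℝ, IntegrableOn (fun t : ℝ => exp (-t ^ 2)) (Ioi a) := fun a => by
    simpa using (integrable_exp_neg_mul_sq one_pos).integrableOn
  have hsplit := intervalIntegral.integral_Ioi_sub_Ioi' (hint 0) (hint (k / √2))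
  have hhalf : ∫ t in Ioi (0 : ℝ), exp (-t ^ 2) = √π / 2 := by
    simpa using integral_gaussian_Ioi 1
  have hπ : 0 < √π := sqrt_pos.2 pi_pos
  rw [Phi, erf, ← hsplit, hhalf]
  field_simp
  ring

lemma gaussianReal_real_Ioi (k : ℝ) : (gaussianReal 0 1).real (Ioi k) = Phi k := by
  have h2 : (0 : ℝ) < √2 := by positivity
  have hpdf : ∀ t, gaussianPDFReal 0 1 (√2 * t) = (√(2 * π))⁻¹ * exp (-t ^ 2) := fun t => by
    simp only [gaussianPDFReal, NNReal.coe_one, mul_one, sub_zero, mul_pow, sq_sqrt zero_le_two]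
    ring_nf
  calc (gaussianReal 0 1).real (Ioi k) = ∫ z in Ioi k, gaussianPDFReal 0 1 z := by
        rw [measureReal_def, gaussianReal_apply_eq_integral _ one_ne_zero, ENNReal.toReal_ofReal
          (setIntegral_nonneg measurableSet_Ioi fun _ _ => gaussianPDFReal_nonneg _ _ _)]
    _ = √2 * ∫ t in Ioi (k / √2), gaussianPDFReal 0 1 (√2 * t) := by
        rw [← smul_eq_mul, integral_comp_mul_left_Ioi' _ _ h2, mul_div_cancel₀ _ h2.ne']
    _ = Phi k := by
        simp only [hpdf, integral_const_mul, Phi_eq_integral_Ioi, sqrt_mul zero_le_two]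
        field_simp

lemma gaussianReal_eq_map_const_sub_mul (m : ℝ) (v : ℝ≥0) :
    gaussianReal m v = (gaussianReal 0 1).map (fun z => m - √v * z) := by
  have hcomp : (fun z => m - √v * z) = (m - ·) ∘ (√v * ·) := rfl
  rw [hcomp, ← Measure.map_map (by fun_prop) (by fun_prop), gaussianReal_map_const_mul,
    gaussianReal_map_const_sub]
  congr
  · ring
  · ext; simp

lemma gaussianReal_real_Iic_zero (m : ℝ) {v : ℝ≥0} (hv : v ≠ 0) :
    (gaussianReal m v).real (Iic 0) = Phi (m / √v) := by
  have hsv : 0 < √(v : ℝ) := by positivity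
  have hpre : (fun z => m - √v * z) ⁻¹' Iic 0 = Ici (m / √v) := by
    ext z
    simp [div_le_iff₀ hsv, mul_comm]
  have := nullSingletonClass_gaussianReal (μ := 0) one_ne_zero
  rw [gaussianReal_eq_map_const_sub_mul, map_measureReal_apply (by fun_prop) measurableSet_Iic,
    hpre, measureReal_congr Ioi_ae_eq_Ici.symm, gaussianReal_real_Ioi]

lemma signLoss_eq_indicator {X : Type*} {n : ℕ} (f : Fin n → X → ℝ) (w : Fin n → ℝ) (x : X)
    (y : ℝ) : signLoss f w x y = (Iic 0).indicator 1 (∑ i, w i * (y * f i x)) := by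
  simp only [signLoss, indicator, mem_Iic, Pi.one_apply, Finset.mul_sum, mul_left_comm]

lemma integral_signLoss_gaussPi {X : Type*} {n : ℕ} (f : Fin n → X → ℝ) (p : Fin n → ℝ)
    (x : X) (y : ℝ) :
    ∫ w, signLoss f w x y ∂(gaussPi p)
      = (gaussianReal (y * ∑ i, p i * f i x) (∑ i, ‖y * f i x‖₊ ^ 2)).real (Iic 0) := by
  have hS : Measurable fun w : Fin n → ℝ => ∑ i, w i * (y * f i x) := by fun_prop
  simp_rw [signLoss_eq_indicator]
  rw [← integral_map hS.aemeasurable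
      (stronglyMeasurable_one.indicator measurableSet_Iic).aestronglyMeasurable,
    gaussPi, map_sum_mul_pi_gaussianReal, integral_indicator_one measurableSet_Iic]
  simp [Finset.mul_sum, mul_comm, mul_left_comm]

theorem binary_gaussian_stochastic_loss_general
    {X : Type*}
    {n : ℕ} (hn : 0 < n) (f : Fin n → X → ℝ)
    (hf : ∀ i x, f i x = 1 ∨ f i x = -1)
    (p : Fin n → ℝ) (x : X) (y : ℝ) (hy : y = 1 ∨ y = -1) :
    ∫ w, signLoss f w x y ∂(gaussPi p)
      = Phi (y * (∑ i, p i * f i x) / Real.sqrt (∑ i, f i x ^ 2)) := by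
  have hy2 : y ^ 2 = 1 := by rcases hy with rfl | rfl <;> norm_num
  have hf2 : ∀ i, f i x ^ 2 = 1 := fun i => by rcases hf i x with h | h <;> simp [h]
  have hvar : ∑ i, ‖y * f i x‖₊ ^ 2 = n := by
    ext
    push_cast
    simp [mul_pow, hy2, hf2]
  rw [integral_signLoss_gaussPi, hvar, gaussianReal_real_Iic_zero _ (by positivity)]
  simp [hf2]

theorem binary_gaussian_stochastic_loss
    {X : Type*} [MeasurableSpace X]
    {n : ℕ} (hn : 0 < n) (f : Fin n → X → ℝ)
    (hf : ∀ i x, f i x = 1 ∨ f i x = -1)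
    (p : Fin n → ℝ) (x : X) (y : ℝ) (hy : y = 1 ∨ y = -1) :
    ∫ w, signLoss f w x y ∂(gaussPi p)
      = Phi (y * (∑ i, p i * f i x) / Real.sqrt (∑ i, f i x ^ 2)) :=
  binary_gaussian_stochastic_loss_general hn f hf p x y hy
end
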